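/- Let X be a Tychonoff (completely regular Hausdorff) topological space and let I and J be ideals of C(X). Then the closure of O(I) equals the closure of O(J) if and only if Ann(I) = Ann(J). -/
import Mathlib

open Set

/-- `cozUnion S` is `O(S)`: the union of the cozero sets of the members of `S ⊆ C(X, ℝ)`. -/
def cozUnion {X : Type*} [TopologicalSpace X] (S : Set C(X, ℝ)) : Set X :=
  ⋃ f ∈ S, {x : X | f x ≠ 0}

/-- `annIdeal I` is `Ann(I)`, the annihilator of the ideal `I` of `C(X, ℝ)`. -/
def annIdeal {X : Type*} [TopologicalSpace X] (I : Ideal C(X, ℝ)) : Ideal C(X, ℝ) where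
  carrier := {g | ∀ f ∈ I, g * f = 0}
  add_mem' := by
    intro a b ha hb f hf
    rw [add_mul, ha f hf, hb f hf, add_zero]
  zero_mem' := fun f _ => zero_mul f
  smul_mem' := by
    intro c g hg f hf
    rw [smul_eq_mul, mul_assoc, hg f hf, mul_zero]

lemma mem_annIdeal_iff {X : Type*} [TopologicalSpace X] (I : Ideal C(X, ℝ)) (g : C(X, ℝ)) :
    g ∈ annIdeal I ↔ ∀ x ∈ cozUnion (I : Set C(X, ℝ)), g x = 0 := by
  constructor
  · intro hg x hx
    simp only [cozUnion, mem_iUnion, mem_setOf_eq] at hx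
    obtain ⟨f, hf, hfx⟩ := hx
    have := congrArg (fun h : C(X, ℝ) => h x) (hg f hf)
    simp only [ContinuousMap.mul_apply, ContinuousMap.zero_apply] at this
    exact (mul_eq_zero.mp this).resolve_right hfx
  · intro hg f hf
    ext x
    simp only [ContinuousMap.mul_apply, ContinuousMap.zero_apply]
    rcases eq_or_ne (f x) 0 with h | h
    · rw [h, mul_zero]
    · rw [hg x (by simp only [cozUnion, mem_iUnion, mem_setOf_eq]; exact ⟨f, hf, h⟩), zero_mul]

lemma mem_annIdeal_iff_closure {X : Type*} [TopologicalSpace X] (I : Ideal C(X, ℝ)) (g : C(X, ℝ)) :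
    g ∈ annIdeal I ↔ ∀ x ∈ closure (cozUnion (I : Set C(X, ℝ))), g x = 0 := by
  rw [mem_annIdeal_iff]
  constructor
  · intro hg x hx
    have hsub : closure (cozUnion (I : Set C(X, ℝ))) ⊆ g ⁻¹' {0} :=
      closure_minimal (fun y hy => hg y hy) (isClosed_singleton.preimage g.continuous)
    exact hsub hx
  · exact fun hg x hx => hg x (subset_closure hx)

/-- For ideals `I`, `J` of `C(X)`, `X` Tychonoff: `closure (O(I)) = closure (O(J))` iff
`Ann(I) = Ann(J)`. -/
theorem closure_cozUnion_eq_iff_annIdeal_eq {X : Type*} [TopologicalSpace X] [T35Space X]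
    (I J : Ideal C(X, ℝ)) :
    closure (cozUnion ((I : Ideal C(X, ℝ)) : Set C(X, ℝ))) =
        closure (cozUnion ((J : Ideal C(X, ℝ)) : Set C(X, ℝ))) ↔
      annIdeal I = annIdeal J := by
  constructor
  · intro h
    ext g
    rw [mem_annIdeal_iff_closure, mem_annIdeal_iff_closure, h]
  · intro h
    have key : ∀ I J : Ideal C(X, ℝ), annIdeal I = annIdeal J →
        closure (cozUnion (I : Set C(X, ℝ))) ⊆ closure (cozUnion (J : Set C(X, ℝ))) := by
      intro I J h x hx
      by_contra hxJ
      obtain ⟨f, hfc, hfx, hfK⟩ := CompletelyRegularSpace.completely_regular x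
        (closure (cozUnion (J : Set C(X, ℝ)))) isClosed_closure hxJ
      set g : C(X, ℝ) := 1 - ⟨fun y => (f y : ℝ), continuous_subtype_val.comp hfc⟩ with hgdef
      have hgJ : g ∈ annIdeal J := by
        rw [mem_annIdeal_iff_closure]
        intro y hy
        have : f y = 1 := hfK hy
        simp [hgdef, this]
      rw [← h, mem_annIdeal_iff_closure] at hgJ
      have := hgJ x hx
      simp [hgdef, hfx] at this
    exact le_antisymm (key I J h) (key J I h.symm)
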